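/- Assume the setup for induced semidirect product sequences: {G_i, λ_i} is an inverse sequence of groups, each φ_i is an automorphism of G_i, and φ_{i−1} ∘ λ_i = λ_i ∘ φ_i for all i ≥ 1. Then the induced semidirect product sequence {G_i ⋊_{φ_i} ⟨t_i⟩, λ̄_i} is stable if and only if the base sequence {G_i, λ_i} is stable. -/
import Mathlib




universe u

/-- The composite bonding homomorphism `λ_{i,j} : G_j →* G_i` of an inverse sequence of
groups, for `i ≤ j`. -/
def invSeqComp {G : ℕ → Type u} [∀ i, Group (G i)] (lam : ∀ i, G (i + 1) →* G i)
    {i j : ℕ} (h : i ≤ j) : G j →* G i :=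
  Nat.leRecOn h (fun {k} f => f.comp (lam k)) (MonoidHom.id (G i))

/-- An inverse sequence of groups is **pro-monomorphic** if there exists `i` such that for
every `j ≥ i` there exists `k₀ ≥ j` with `ker (λ_{i,k}) = ker (λ_{j,k})` for all `k ≥ k₀`. -/
def ProMono {G : ℕ → Type u} [∀ i, Group (G i)] (lam : ∀ i, G (i + 1) →* G i) : Prop :=
  ∃ i : ℕ, ∀ j : ℕ, ∀ hij : i ≤ j, ∃ k₀ : ℕ, ∃ hjk₀ : j ≤ k₀, ∀ k : ℕ, ∀ hk₀k : k₀ ≤ k,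
    (invSeqComp lam (hij.trans (hjk₀.trans hk₀k))).ker =
      (invSeqComp lam (hjk₀.trans hk₀k)).ker

/-- An inverse sequence of groups is **semistable** (Mittag-Leffler) if for every `i` there
exists `j ≥ i` such that `Im (λ_{i,k}) = Im (λ_{i,j})` for all `k ≥ j`. -/
def Semistable {G : ℕ → Type u} [∀ i, Group (G i)] (lam : ∀ i, G (i + 1) →* G i) : Prop :=
  ∀ i : ℕ, ∃ j : ℕ, ∃ hij : i ≤ j, ∀ k : ℕ, ∀ hjk : j ≤ k,
    (invSeqComp lam (hij.trans hjk)).range = (invSeqComp lam hij).range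

/-- An inverse sequence of groups is **stable** if it is pro-monomorphic and semistable. -/
def Stable {G : ℕ → Type u} [∀ i, Group (G i)] (lam : ∀ i, G (i + 1) →* G i) : Prop :=
  ProMono lam ∧ Semistable lam

/-- The semidirect product `G ⋊_φ ⟨t⟩` of a group `G` with an infinite cyclic group
`⟨t⟩ ≅ ℤ`, where conjugation by `t` acts on `G` as the automorphism `φ`. -/
abbrev ZSemidirect (G : Type u) [Group G] (φ : MulAut G) : Type u :=
  G ⋊[zpowersHom (MulAut G) φ] Multiplicative ℤ

/-- The stable generator `t` of the infinite cyclic factor of `G ⋊_φ ⟨t⟩`. -/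
def ZSemidirect.t (G : Type u) [Group G] (φ : MulAut G) : ZSemidirect G φ :=
  SemidirectProduct.inr (Multiplicative.ofAdd 1)

open SemidirectProduct

section Aux

variable {G : ℕ → Type u} [∀ i, Group (G i)] (lam : ∀ i, G (i + 1) →* G i)
    (φ : ∀ i, MulAut (G i))
    (lamBar : ∀ i, ZSemidirect (G (i + 1)) (φ (i + 1)) →* ZSemidirect (G i) (φ i))
    (hBarOf : ∀ i (g : G (i + 1)),
      lamBar i (SemidirectProduct.inl g) = SemidirectProduct.inl (lam i g))
    (hBarT : ∀ i, lamBar i (ZSemidirect.t (G (i + 1)) (φ (i + 1))) = ZSemidirect.t (G i) (φ i))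

lemma invSeqComp_self {i : ℕ} (h : i ≤ i) : invSeqComp lam h = MonoidHom.id (G i) :=
  Nat.leRecOn_self _

lemma invSeqComp_succ {i j : ℕ} (h : i ≤ j) (h2 : i ≤ j + 1) :
    invSeqComp lam h2 = (invSeqComp lam h).comp (lam j) :=
  Nat.leRecOn_succ h _

include hBarT in
lemma lamBar_inr (i : ℕ) (z : Multiplicative ℤ) :
    lamBar i (inr z) = inr z := by
  have hz : ∀ (H : Type u) [Group H] (ψ : MulAut H),
      (inr z : ZSemidirect H ψ) = (ZSemidirect.t H ψ) ^ (z.toAdd) := by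
    intro H _ ψ
    rw [ZSemidirect.t, ← map_zpow]
    congr 1
    rw [← ofAdd_zsmul]
    simp
  rw [hz, map_zpow, hBarT, ← hz]

include hBarOf hBarT in
lemma lamBar_apply (i : ℕ) (x : ZSemidirect (G (i + 1)) (φ (i + 1))) :
    lamBar i x = ⟨lam i x.left, x.right⟩ := by
  conv_lhs => rw [← inl_left_mul_inr_right x]
  rw [map_mul, hBarOf, lamBar_inr φ lamBar hBarT, mk_eq_inl_mul_inr]

include hBarOf hBarT in
lemma barComp_apply {i j : ℕ} (h : i ≤ j) (x : ZSemidirect (G j) (φ j)) :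
    invSeqComp (G := fun n => ZSemidirect (G n) (φ n)) lamBar h x = ⟨invSeqComp lam h x.left, x.right⟩ := by
  induction j, h using Nat.le_induction with
  | base =>
    rw [invSeqComp_self, invSeqComp_self]
    exact (SemidirectProduct.ext rfl rfl)
  | succ j hij ih =>
    rw [invSeqComp_succ (G := fun n => ZSemidirect (G n) (φ n)) lamBar hij
        (Nat.le_succ_of_le hij),
      invSeqComp_succ lam hij (Nat.le_succ_of_le hij), MonoidHom.comp_apply,
      MonoidHom.comp_apply, ih, lamBar_apply lam φ lamBar hBarOf hBarT]

include hBarOf hBarT in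
lemma mem_ker_bar {i j : ℕ} (h : i ≤ j) (x : ZSemidirect (G j) (φ j)) :
    x ∈ (invSeqComp (G := fun n => ZSemidirect (G n) (φ n)) lamBar h).ker ↔
      x.left ∈ (invSeqComp lam h).ker ∧ x.right = 1 := by
  rw [MonoidHom.mem_ker, MonoidHom.mem_ker,
    barComp_apply lam φ lamBar hBarOf hBarT h x, SemidirectProduct.ext_iff]
  rfl

include hBarOf hBarT in
lemma mem_range_bar {i j : ℕ} (h : i ≤ j) (x : ZSemidirect (G i) (φ i)) :
    x ∈ (invSeqComp (G := fun n => ZSemidirect (G n) (φ n)) lamBar h).range ↔ x.left ∈ (invSeqComp lam h).range := by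
  constructor
  · rintro ⟨y, rfl⟩
    rw [barComp_apply lam φ lamBar hBarOf hBarT h y]
    exact ⟨y.left, rfl⟩
  · rintro ⟨g, hg⟩
    refine ⟨⟨g, x.right⟩, ?_⟩
    rw [barComp_apply lam φ lamBar hBarOf hBarT h]
    exact SemidirectProduct.ext hg rfl

include hBarOf hBarT in
lemma ker_eq_iff {i j k : ℕ} (h1 : i ≤ k) (h2 : j ≤ k) :
    (invSeqComp (G := fun n => ZSemidirect (G n) (φ n)) lamBar h1).ker = (invSeqComp (G := fun n => ZSemidirect (G n) (φ n)) lamBar h2).ker ↔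
      (invSeqComp lam h1).ker = (invSeqComp lam h2).ker := by
  constructor
  · intro H
    ext g
    have : (⟨g, 1⟩ : ZSemidirect (G k) (φ k)) ∈ (invSeqComp (G := fun n => ZSemidirect (G n) (φ n)) lamBar h1).ker ↔
        (⟨g, 1⟩ : ZSemidirect (G k) (φ k)) ∈ (invSeqComp (G := fun n => ZSemidirect (G n) (φ n)) lamBar h2).ker := by rw [H]
    simpa [mem_ker_bar lam φ lamBar hBarOf hBarT] using this
  · intro H
    ext x
    rw [mem_ker_bar lam φ lamBar hBarOf hBarT, mem_ker_bar lam φ lamBar hBarOf hBarT, H]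

include hBarOf hBarT in
lemma range_eq_iff {i j k : ℕ} (h1 : i ≤ j) (h2 : i ≤ k) :
    (invSeqComp (G := fun n => ZSemidirect (G n) (φ n)) lamBar h1).range = (invSeqComp (G := fun n => ZSemidirect (G n) (φ n)) lamBar h2).range ↔
      (invSeqComp lam h1).range = (invSeqComp lam h2).range := by
  constructor
  · intro H
    ext g
    have : (⟨g, 1⟩ : ZSemidirect (G i) (φ i)) ∈ (invSeqComp (G := fun n => ZSemidirect (G n) (φ n)) lamBar h1).range ↔
        (⟨g, 1⟩ : ZSemidirect (G i) (φ i)) ∈ (invSeqComp (G := fun n => ZSemidirect (G n) (φ n)) lamBar h2).range := by rw [H]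
    simpa [mem_range_bar lam φ lamBar hBarOf hBarT] using this
  · intro H
    ext x
    rw [mem_range_bar lam φ lamBar hBarOf hBarT, mem_range_bar lam φ lamBar hBarOf hBarT, H]

end Aux

/-- Given an inverse sequence of groups `{G_i, λ_i}` and automorphisms
`φ_i ∈ Aut(G_i)` with `φ_{i} ∘ λ_{i+1} = λ_{i+1} ∘ φ_{i+1}`, the induced semidirect product
sequence `{G_i ⋊_{φ_i} ⟨t_i⟩, λ̄_i}` is stable iff the base sequence is. -/
theorem induced_semidirect_sequence_stable_iff
    {G : ℕ → Type u} [∀ i, Group (G i)] (lam : ∀ i, G (i + 1) →* G i)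
    (φ : ∀ i, MulAut (G i))
    (hcomp : ∀ i (g : G (i + 1)), φ i (lam i g) = lam i (φ (i + 1) g))
    (lamBar : ∀ i, ZSemidirect (G (i + 1)) (φ (i + 1)) →* ZSemidirect (G i) (φ i))
    (hBarOf : ∀ i (g : G (i + 1)),
      lamBar i (SemidirectProduct.inl g) = SemidirectProduct.inl (lam i g))
    (hBarT : ∀ i, lamBar i (ZSemidirect.t (G (i + 1)) (φ (i + 1))) = ZSemidirect.t (G i) (φ i)) :
    Stable (G := fun i => ZSemidirect (G i) (φ i)) lamBar ↔ Stable lam := by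
  unfold Stable ProMono Semistable
  constructor
  · rintro ⟨⟨i, hi⟩, hs⟩
    refine ⟨⟨i, fun j hij => ?_⟩, fun i => ?_⟩
    · obtain ⟨k₀, hjk₀, hk⟩ := hi j hij
      exact ⟨k₀, hjk₀, fun k hk₀k => (ker_eq_iff lam φ lamBar hBarOf hBarT _ _).mp (hk k hk₀k)⟩
    · obtain ⟨j, hij, hk⟩ := hs i
      exact ⟨j, hij, fun k hjk => (range_eq_iff lam φ lamBar hBarOf hBarT _ _).mp (hk k hjk)⟩
  · rintro ⟨⟨i, hi⟩, hs⟩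
    refine ⟨⟨i, fun j hij => ?_⟩, fun i => ?_⟩
    · obtain ⟨k₀, hjk₀, hk⟩ := hi j hij
      exact ⟨k₀, hjk₀, fun k hk₀k => (ker_eq_iff lam φ lamBar hBarOf hBarT _ _).mpr (hk k hk₀k)⟩
    · obtain ⟨j, hij, hk⟩ := hs i
      exact ⟨j, hij, fun k hjk => (range_eq_iff lam φ lamBar hBarOf hBarT _ _).mpr (hk k hjk)⟩
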